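/- arXiv:2103.04455 — 2 statements merged into one kernel-verified Lean document; each statement's English description precedes it below -/
import Mathlib

section
/- A nonempty set S ⊆ S_Φ is s-convex if and only if there exists a nonempty convex set C ⊆ ℝⁿ \ {0} such that S = ρ(C). -/
open Set
open scoped RealInnerProductSpace

/-- `rho Φ x = x / Φ x` (equal to `0` when `Φ x = 0`, in particular `rho Φ 0 = 0`). -/
noncomputable def rho {n : ℕ} (Φ : EuclideanSpace ℝ (Fin n) → ℝ)
    (x : EuclideanSpace ℝ (Fin n)) : EuclideanSpace ℝ (Fin n) := (Φ x)⁻¹ • x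

/-- The `Φ`-sphere `S_Φ = {x | Φ x = 1}`. -/
def sphereSet {n : ℕ} (Φ : EuclideanSpace ℝ (Fin n) → ℝ) : Set (EuclideanSpace ℝ (Fin n)) :=
  {x | Φ x = 1}

/-- `S` is s-convex: `ρ(λx + (1-λ)y) ∈ S` for all `x, y ∈ S`, `λ ∈ [0,1]`. -/
def SConvex {n : ℕ} (Φ : EuclideanSpace ℝ (Fin n) → ℝ)
    (S : Set (EuclideanSpace ℝ (Fin n))) : Prop :=
  ∀ x ∈ S, ∀ y ∈ S, ∀ l : ℝ, l ∈ Set.Icc (0 : ℝ) 1 → rho Φ (l • x + (1 - l) • y) ∈ S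

/-! Since `ρ` is invariant under positive scaling, `ρ(a • u + b • v) = ρ(l • u + (1 - l) • v)` with
`l = a / (a + b)` whenever `a, b ≥ 0` and `a + b > 0`. Hence an s-convex `S` is the image of the
convex cone `ρ⁻¹(S)`, and conversely `ρ(l • ρ x + (1 - l) • ρ y)` is `ρ` of a convex combination
of `x` and `y`, so `ρ(C)` is s-convex for convex `C`. -/

section

variable {n : ℕ} {Φ : EuclideanSpace ℝ (Fin n) → ℝ}

lemma rho_zero : rho Φ 0 = 0 := smul_zero _

lemma rho_eq_self_of_mem_sphereSet {x : EuclideanSpace ℝ (Fin n)} (hx : x ∈ sphereSet Φ) :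
    rho Φ x = x := by
  rw [rho, show Φ x = 1 from hx, inv_one, one_smul]

lemma zero_notMem_sphereSet (hΦ0 : Φ 0 = 0) : (0 : EuclideanSpace ℝ (Fin n)) ∉ sphereSet Φ := by
  simp [sphereSet, hΦ0]

lemma smul_rho_self {x : EuclideanSpace ℝ (Fin n)} (hx : Φ x ≠ 0) : Φ x • rho Φ x = x := by
  rw [rho, smul_smul, mul_inv_cancel₀ hx, one_smul]

lemma phi_pos_of_ne_zero (hnn : ∀ x, 0 ≤ Φ x) (hzero : ∀ x, Φ x = 0 ↔ x = 0)
    {x : EuclideanSpace ℝ (Fin n)} (hx : x ≠ 0) : 0 < Φ x :=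
  (hnn x).lt_of_ne' (mt (hzero x).1 hx)

lemma rho_smul_of_pos (hhom : ∀ (t : ℝ), 0 ≤ t → ∀ x, Φ (t • x) = t * Φ x) {t : ℝ} (ht : 0 < t)
    (x : EuclideanSpace ℝ (Fin n)) : rho Φ (t • x) = rho Φ x := by
  rw [rho, rho, hhom t ht.le, smul_smul, mul_inv_rev, mul_assoc, inv_mul_cancel₀ ht.ne', mul_one]

lemma exists_rho_smul_add_smul_eq (hhom : ∀ (t : ℝ), 0 ≤ t → ∀ x, Φ (t • x) = t * Φ x)
    {a b : ℝ} (ha : 0 ≤ a) (hb : 0 ≤ b) (hab : 0 < a + b) (x y : EuclideanSpace ℝ (Fin n)) :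
    ∃ l ∈ Icc (0 : ℝ) 1, rho Φ (a • x + b • y) = rho Φ (l • x + (1 - l) • y) := by
  refine ⟨a / (a + b), ⟨by positivity, div_le_one_of_le₀ (by linarith) hab.le⟩, ?_⟩
  have hsplit : a • x + b • y = (a + b) • ((a / (a + b)) • x + (1 - a / (a + b)) • y) := by
    rw [one_sub_div hab.ne', add_sub_cancel_left, smul_add, smul_smul, smul_smul,
      mul_div_cancel₀ _ hab.ne', mul_div_cancel₀ _ hab.ne']
  rw [hsplit, rho_smul_of_pos hhom hab]

lemma convex_rho_preimage (hnn : ∀ x, 0 ≤ Φ x)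
    (hhom : ∀ (t : ℝ), 0 ≤ t → ∀ x, Φ (t • x) = t * Φ x) (hzero : ∀ x, Φ x = 0 ↔ x = 0)
    {S : Set (EuclideanSpace ℝ (Fin n))} (hS : SConvex Φ S) (h0S : 0 ∉ S) :
    Convex ℝ (rho Φ ⁻¹' S) := by
  intro z hz w hw a b ha hb hab
  have hpos : ∀ {v}, rho Φ v ∈ S → 0 < Φ v := fun hv =>
    phi_pos_of_ne_zero hnn hzero (by rintro rfl; exact h0S (rho_zero ▸ hv))
  have hz₀ := hpos hz
  have hw₀ := hpos hw
  have hsplit : a • z + b • w = (a * Φ z) • rho Φ z + (b * Φ w) • rho Φ w := by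
    rw [mul_smul, mul_smul, smul_rho_self hz₀.ne', smul_rho_self hw₀.ne']
  obtain ⟨l, hl, heq⟩ := exists_rho_smul_add_smul_eq hhom (mul_nonneg ha hz₀.le)
    (mul_nonneg hb hw₀.le) (convex_Ioi (0 : ℝ) hz₀ hw₀ ha hb hab)
    (rho Φ z) (rho Φ w)
  change rho Φ (a • z + b • w) ∈ S
  rw [hsplit, heq]
  exact hS _ hz _ hw l hl

lemma sConvex_rho_image (hnn : ∀ x, 0 ≤ Φ x)
    (hhom : ∀ (t : ℝ), 0 ≤ t → ∀ x, Φ (t • x) = t * Φ x) (hzero : ∀ x, Φ x = 0 ↔ x = 0)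
    {C : Set (EuclideanSpace ℝ (Fin n))} (hC : Convex ℝ C) (h0C : 0 ∉ C) :
    SConvex Φ (rho Φ '' C) := by
  rintro _ ⟨x, hx, rfl⟩ _ ⟨y, hy, rfl⟩ l ⟨hl0, hl1⟩
  have hx₀ := inv_pos.2 (phi_pos_of_ne_zero hnn hzero (ne_of_mem_of_not_mem hx h0C))
  have hy₀ := inv_pos.2 (phi_pos_of_ne_zero hnn hzero (ne_of_mem_of_not_mem hy h0C))
  obtain ⟨m, ⟨hm0, hm1⟩, heq⟩ := exists_rho_smul_add_smul_eq hhom (mul_nonneg hl0 hx₀.le)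
    (mul_nonneg (sub_nonneg.2 hl1) hy₀.le)
    (convex_Ioi (0 : ℝ) hx₀ hy₀ hl0 (sub_nonneg.2 hl1) (add_sub_cancel _ _)) x y
  refine ⟨m • x + (1 - m) • y, hC hx hy hm0 (sub_nonneg.2 hm1) (add_sub_cancel _ _), ?_⟩
  rw [← heq, mul_smul, mul_smul]
  rfl

end

theorem stmt3_general {n : ℕ} (Φ : EuclideanSpace ℝ (Fin n) → ℝ)
    (hnn : ∀ x, 0 ≤ Φ x)
    (hhom : ∀ (t : ℝ), 0 ≤ t → ∀ x, Φ (t • x) = t * Φ x)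
    (hzero : ∀ x, Φ x = 0 ↔ x = 0)
    (S : Set (EuclideanSpace ℝ (Fin n))) (hne : S.Nonempty) (hsub : S ⊆ sphereSet Φ) :
    SConvex Φ S ↔
      ∃ C : Set (EuclideanSpace ℝ (Fin n)),
        C.Nonempty ∧ Convex ℝ C ∧ (0 : EuclideanSpace ℝ (Fin n)) ∉ C ∧ S = rho Φ '' C := by
  have h0S : (0 : EuclideanSpace ℝ (Fin n)) ∉ S := fun h =>
    zero_notMem_sphereSet ((hzero 0).2 rfl) (hsub h)
  have hS : rho Φ '' (rho Φ ⁻¹' S) = S :=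
    image_preimage_eq_of_subset fun x hx => ⟨x, rho_eq_self_of_mem_sphereSet (hsub hx)⟩
  constructor
  · intro hconv
    refine ⟨rho Φ ⁻¹' S, (hS.symm ▸ hne).of_image,
      convex_rho_preimage hnn hhom hzero hconv h0S, ?_, hS.symm⟩
    rwa [mem_preimage, rho_zero]
  · rintro ⟨C, -, hC, h0C, rfl⟩
    exact sConvex_rho_image hnn hhom hzero hC h0C

theorem stmt3 {n : ℕ} (hn : 2 ≤ n) (Φ : EuclideanSpace ℝ (Fin n) → ℝ)
    (hc : Continuous Φ) (hnn : ∀ x, 0 ≤ Φ x)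
    (hhom : ∀ (t : ℝ), 0 ≤ t → ∀ x, Φ (t • x) = t * Φ x)
    (hzero : ∀ x, Φ x = 0 ↔ x = 0)
    (S : Set (EuclideanSpace ℝ (Fin n))) (hne : S.Nonempty) (hsub : S ⊆ sphereSet Φ) :
    SConvex Φ S ↔
      ∃ C : Set (EuclideanSpace ℝ (Fin n)),
        C.Nonempty ∧ Convex ℝ C ∧ (0 : EuclideanSpace ℝ (Fin n)) ∉ C ∧ S = rho Φ '' C :=
  stmt3_general Φ hnn hhom hzero S hne hsub
end

section
/- Let S ⊆ S_Φ be nonempty with 0 ∉ conv S. Then ρ(conv S) = S_Φ ∩ cone S, where cone S = ℝ₊·conv S is the convex conic hull of S. -/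
/-! By positive homogeneity, the ray `ℝ₊ x` through a point `x ≠ 0` meets `S_Φ` in exactly one
point, namely `ρ x`. Since `0 ∉ conv S`, every point of `conv S` spans such a ray, so radially
projecting `conv S` onto `S_Φ` gives exactly the points of `S_Φ` lying in `cone S`. -/

open Set
open scoped RealInnerProductSpace

section RadialProjection

variable {n : ℕ} {Φ : EuclideanSpace ℝ (Fin n) → ℝ}

theorem rho_mem_sphereSet (hhom : ∀ (t : ℝ), 0 ≤ t → ∀ x, Φ (t • x) = t * Φ x)
    {x : EuclideanSpace ℝ (Fin n)} (hx : 0 < Φ x) : rho Φ x ∈ sphereSet Φ := by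
  change Φ ((Φ x)⁻¹ • x) = 1
  rw [hhom _ (inv_nonneg.2 hx.le), inv_mul_cancel₀ hx.ne']

theorem smul_eq_rho_of_smul_mem_sphereSet
    (hhom : ∀ (t : ℝ), 0 ≤ t → ∀ x, Φ (t • x) = t * Φ x)
    {x : EuclideanSpace ℝ (Fin n)} {t : ℝ} (ht : 0 ≤ t) (h : t • x ∈ sphereSet Φ) :
    t • x = rho Φ x := by
  have htΦ : t * Φ x = 1 := by rw [← hhom t ht]; exact h
  rw [rho, eq_inv_of_mul_eq_one_left htΦ]

theorem image_rho_eq_sphereSet_inter_cone (hnn : ∀ x, 0 ≤ Φ x)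
    (hhom : ∀ (t : ℝ), 0 ≤ t → ∀ x, Φ (t • x) = t * Φ x)
    (hzero : ∀ x, Φ x = 0 ↔ x = 0)
    {C : Set (EuclideanSpace ℝ (Fin n))} (h0 : (0 : EuclideanSpace ℝ (Fin n)) ∉ C) :
    rho Φ '' C = sphereSet Φ ∩ {y | ∃ t : ℝ, 0 ≤ t ∧ ∃ x ∈ C, y = t • x} := by
  have hpos : ∀ x ∈ C, 0 < Φ x := fun x hx =>
    (hnn x).lt_of_ne fun h => h0 ((hzero x).1 h.symm ▸ hx)
  ext z
  constructor
  · rintro ⟨x, hx, rfl⟩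
    exact ⟨rho_mem_sphereSet hhom (hpos x hx), (Φ x)⁻¹, inv_nonneg.2 (hnn x), x, hx, rfl⟩
  · rintro ⟨hz, t, ht, x, hx, rfl⟩
    exact ⟨x, hx, (smul_eq_rho_of_smul_mem_sphereSet hhom ht hz).symm⟩

end RadialProjection

theorem stmt13_general {n : ℕ} (Φ : EuclideanSpace ℝ (Fin n) → ℝ)
    (hnn : ∀ x, 0 ≤ Φ x)
    (hhom : ∀ (t : ℝ), 0 ≤ t → ∀ x, Φ (t • x) = t * Φ x)
    (hzero : ∀ x, Φ x = 0 ↔ x = 0)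
    (S : Set (EuclideanSpace ℝ (Fin n)))
    (hha : (0 : EuclideanSpace ℝ (Fin n)) ∉ convexHull ℝ S) :
    rho Φ '' (convexHull ℝ S) =
      sphereSet Φ ∩ {y | ∃ t : ℝ, 0 ≤ t ∧ ∃ x ∈ convexHull ℝ S, y = t • x} :=
  image_rho_eq_sphereSet_inter_cone hnn hhom hzero hha

theorem stmt13 {n : ℕ} (hn : 2 ≤ n) (Φ : EuclideanSpace ℝ (Fin n) → ℝ)
    (hc : Continuous Φ) (hnn : ∀ x, 0 ≤ Φ x)
    (hhom : ∀ (t : ℝ), 0 ≤ t → ∀ x, Φ (t • x) = t * Φ x)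
    (hzero : ∀ x, Φ x = 0 ↔ x = 0)
    (S : Set (EuclideanSpace ℝ (Fin n))) (hne : S.Nonempty) (hsub : S ⊆ sphereSet Φ)
    (hha : (0 : EuclideanSpace ℝ (Fin n)) ∉ convexHull ℝ S) :
    rho Φ '' (convexHull ℝ S) =
      sphereSet Φ ∩ {y | ∃ t : ℝ, 0 ≤ t ∧ ∃ x ∈ convexHull ℝ S, y = t • x} :=
  stmt13_general Φ hnn hhom hzero S hha
end
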